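/- arXiv:1701.06744 — 2 statements merged into one kernel-verified Lean document; each statement's English description precedes it below -/
import Mathlib

section
/- Let λ₁, λ₂, λ₃ ≥ 0 with λ₁² + λ₂² + λ₃² = 1. Then min over distinct triples (j,k,l) of (λⱼ² + λₖ²)·h(λⱼ²/(λⱼ² + λₖ²)) ≤ 2/3, with equality when λ₁ = λ₂ = λ₃ = 1/√3. (The standard W state has maximal minimal control power among generalized W states.) -/
noncomputable def binEnt (x : ℝ) : ℝ := -(x * Real.logb 2 x) - (1 - x) * Real.logb 2 (1 - x)

noncomputable def cpW (l : Fin 3 → ℝ) (σ : Equiv.Perm (Fin 3)) : ℝ :=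
  ((l (σ 0))^2 + (l (σ 1))^2) * binEnt ((l (σ 0))^2 / ((l (σ 0))^2 + (l (σ 1))^2))

lemma binEnt_eq (x : ℝ) : binEnt x = Real.binEntropy x / Real.log 2 := by
  unfold binEnt Real.binEntropy
  rw [Real.log_inv, Real.log_inv, Real.logb, Real.logb]
  ring

lemma binEnt_le_one (x : ℝ) : binEnt x ≤ 1 := by
  rw [binEnt_eq, div_le_one (Real.log_pos (by norm_num))]
  exact Real.binEntropy_le_log_two

lemma binEnt_half : binEnt (1/2 : ℝ) = 1 := by
  unfold binEnt
  have : Real.logb 2 (1/2 : ℝ) = -1 := by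
    rw [one_div, Real.logb_inv, Real.logb_self_eq_one] <;> norm_num
  rw [show (1:ℝ)-1/2 = 1/2 by norm_num, this]; norm_num

theorem mcp_gW_le_two_thirds (l : Fin 3 → ℝ) (hpos : ∀ i, 0 ≤ l i)
    (hnorm : (l 0)^2 + (l 1)^2 + (l 2)^2 = 1) :
    (Finset.univ.inf' Finset.univ_nonempty (cpW l)) ≤ 2/3 ∧
      ((∀ i, l i = 1 / Real.sqrt 3) →
        Finset.univ.inf' Finset.univ_nonempty (cpW l) = 2/3) := by
  constructor
  · -- there is i with (l i)^2 ≥ 1/3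
    obtain ⟨i, hi⟩ : ∃ i : Fin 3, (1:ℝ)/3 ≤ (l i)^2 := by
      by_contra h
      push_neg at h
      have := h 0; have := h 1; have := h 2
      linarith
    have key : ∀ a b : Fin 3, a ≠ i → b ≠ i → a ≠ b →
        (l a)^2 + (l b)^2 ≤ 2/3 := by
      intro a b ha hb hab
      fin_cases a <;> fin_cases b <;> fin_cases i <;> simp_all <;> nlinarith [sq_nonneg (l 0), sq_nonneg (l 1), sq_nonneg (l 2)]
    set σ : Equiv.Perm (Fin 3) := Equiv.swap 2 i with hσ
    have hs2 : σ 2 = i := Equiv.swap_apply_left 2 i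
    have h0 : σ 0 ≠ i := by rw [← hs2]; exact fun h => by simpa using σ.injective h
    have h1 : σ 1 ≠ i := by rw [← hs2]; exact fun h => by simpa using σ.injective h
    have h01 : σ 0 ≠ σ 1 := fun h => by simpa using σ.injective h
    have hsum : (l (σ 0))^2 + (l (σ 1))^2 ≤ 2/3 := key _ _ h0 h1 h01
    have hnn : 0 ≤ (l (σ 0))^2 + (l (σ 1))^2 := by positivity
    calc Finset.univ.inf' Finset.univ_nonempty (cpW l) ≤ cpW l σ :=
          Finset.inf'_le _ (Finset.mem_univ σ)
      _ ≤ ((l (σ 0))^2 + (l (σ 1))^2) * 1 := by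
          unfold cpW
          exact mul_le_mul_of_nonneg_left (binEnt_le_one _) hnn
      _ ≤ 2/3 := by linarith
  · intro hl
    have hsq : ∀ i : Fin 3, (l i)^2 = 1/3 := by
      intro i
      rw [hl i, div_pow, one_pow, Real.sq_sqrt (by norm_num : (3:ℝ) ≥ 0)]
    have hval : ∀ σ : Equiv.Perm (Fin 3), cpW l σ = 2/3 := by
      intro σ
      unfold cpW
      rw [hsq, hsq]
      norm_num [show (1:ℝ)/3 + 1/3 = 2/3 by norm_num, show (1:ℝ)/3 / (2/3) = 1/2 by norm_num, binEnt_half]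
    apply le_antisymm
    · exact le_of_le_of_eq (Finset.inf'_le _ (Finset.mem_univ 1)) (hval 1)
    · exact Finset.le_inf' _ _ fun σ _ => (hval σ).ge
end

section
/- Let λ₁, λ₂, λ₃ > 0 with λ₁² + λ₂² + λ₃² = 1 and suppose λ₃² = max{λ₁²,λ₂²,λ₃²}. Then (λ₁² + λ₂²)·h(λ₁²/(λ₁² + λ₂²)) ≤ (λ₁² + λ₃²)·h(λ₁²/(λ₁² + λ₃²)). -/
open Real

theorem ConcaveOn.map_add_sub_map_le {s : Set ℝ} {f : ℝ → ℝ} (hf : ConcaveOn ℝ s f)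
    {x y d : ℝ} (hx : x ∈ s) (hyd : y + d ∈ s) (hxy : x ≤ y) (hd : 0 ≤ d) :
    f (y + d) - f y ≤ f (x + d) - f x := by
  rcases (add_le_add hxy hd).eq_or_lt' with hxd | hlt
  · obtain rfl : y = x := by linarith
    obtain rfl : d = 0 := by linarith
    rfl
  -- `x + d` and `y` are mirror-image convex combinations of the endpoints `x` and `y + d`.
  set t := (y - x) / (y + d - x)
  have hpos : 0 < y + d - x := by linarith
  have ht : 0 ≤ t := div_nonneg (by linarith) hpos.le
  have ht' : 0 ≤ 1 - t := by
    rw [sub_nonneg, div_le_one hpos]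
    linarith
  have hx_d : t • x + (1 - t) • (y + d) = x + d := by
    simp only [smul_eq_mul, t]
    field_simp
    ring
  have hy : (1 - t) • x + t • (y + d) = y := by
    simp only [smul_eq_mul, t]
    field_simp
    ring
  have h₁ := hf.2 hx hyd ht ht' (by ring)
  have h₂ := hf.2 hx hyd ht' ht (by ring)
  rw [hx_d] at h₁
  rw [hy] at h₂
  simp only [smul_eq_mul] at h₁ h₂
  linarith

theorem binEnt_eq_binEntropy_div (p : ℝ) : binEnt p = binEntropy p / log 2 := by
  simp only [binEnt, binEntropy, logb, log_inv]
  ring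

theorem mul_binEntropy_div_add (a x : ℝ) :
    (a + x) * binEntropy (a / (a + x)) = negMulLog a + negMulLog x - negMulLog (a + x) := by
  rcases eq_or_ne (a + x) 0 with hs | hs
  · obtain rfl : x = -a := by linarith
    simp [negMulLog, log_neg_eq_log]
  have ha : negMulLog a = a / (a + x) * negMulLog (a + x) + (a + x) * negMulLog (a / (a + x)) := by
    rw [← negMulLog_mul, mul_div_cancel₀ _ hs]
  have hx : negMulLog x =
      (1 - a / (a + x)) * negMulLog (a + x) + (a + x) * negMulLog (1 - a / (a + x)) := by
    rw [← negMulLog_mul, mul_one_sub, mul_div_cancel₀ _ hs, add_sub_cancel_left]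
  rw [binEntropy_eq_negMulLog_add_negMulLog_one_sub, ha, hx]
  ring

theorem mul_binEnt_div_add_mono {a x y : ℝ} (ha : 0 ≤ a) (hx : 0 ≤ x) (hxy : x ≤ y) :
    (a + x) * binEnt (a / (a + x)) ≤ (a + y) * binEnt (a / (a + y)) := by
  simp only [binEnt_eq_binEntropy_div, mul_div_assoc', mul_binEntropy_div_add]
  have hinc := concaveOn_negMulLog.map_add_sub_map_le hx
    (Set.mem_Ici.2 (by linarith) : y + a ∈ Set.Ici 0) hxy ha
  rw [add_comm x a, add_comm y a] at hinc
  exact div_le_div_of_nonneg_right (by linarith) (log_nonneg one_le_two)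

theorem mcp_gW_min_at_largest_general (l1 l2 l3 : ℝ)
    (hmax : l3^2 = max (max (l1^2) (l2^2)) (l3^2)) :
    (l1^2 + l2^2) * binEnt (l1^2 / (l1^2 + l2^2)) ≤
      (l1^2 + l3^2) * binEnt (l1^2 / (l1^2 + l3^2)) := by
  have hle : l2^2 ≤ l3^2 := hmax ▸ (le_max_right _ _).trans (le_max_left _ _)
  exact mul_binEnt_div_add_mono (sq_nonneg l1) (sq_nonneg l2) hle

theorem mcp_gW_min_at_largest (l1 l2 l3 : ℝ) (h1 : 0 < l1) (h2 : 0 < l2) (h3 : 0 < l3)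
    (hnorm : l1^2 + l2^2 + l3^2 = 1)
    (hmax : l3^2 = max (max (l1^2) (l2^2)) (l3^2)) :
    (l1^2 + l2^2) * binEnt (l1^2 / (l1^2 + l2^2)) ≤
      (l1^2 + l3^2) * binEnt (l1^2 / (l1^2 + l3^2)) :=
  mcp_gW_min_at_largest_general l1 l2 l3 hmax
end
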